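/- For probability distributions P and Q on a finite set with Q_k > 0 whenever P_k > 0, the sup-norm bound ‖P - Q‖_∞ ≤ √(2·D_KL(P‖Q)) holds. In particular, if D_KL(P‖Q) < γ²/8 where γ is the K-boundary margin of Q, then ‖P - Q‖_∞ < γ/2 and the Top-K set of P equals that of Q. -/

import Mathlib

/-!
Merging all outcomes other than `k` into a single one does not increase the divergence
(log-sum inequality), so `D(P‖Q)` dominates the binary divergence of `(P k, Q k)`. The binary
Pinsker inequality bounds the latter below by `2 (P k - Q k)²`: the gap between the two sides is
convex in `P k` on `[0, 1]` with a critical point at `Q k`. If every coordinate moves by less than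
`γ / 2`, the margin `γ` keeps each element of `S` strictly above each element outside it, and a
set of the same size with the (weak) Top-K property must then be `S`.
-/

open Real Finset

lemma mul_log_add_sub_le_mul_log_div {a b c : ℝ} (ha : 0 ≤ a) (hb : 0 ≤ b)
    (hab : 0 < a → 0 < b) (hc : 0 < c) : a * log c + a - c * b ≤ a * log (a / b) := by
  rcases ha.eq_or_lt with rfl | ha
  · simpa using mul_nonneg hc.le hb
  have hb := hab ha
  have key : log (c * b / a) ≤ c * b / a - 1 := log_le_sub_one_of_pos (by positivity)
  rw [log_div (by positivity) ha.ne', log_mul hc.ne' hb.ne'] at key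
  have hmul : a * (c * b / a - 1) = c * b - a := by field_simp
  rw [log_div ha.ne' hb.ne']
  linarith [mul_le_mul_of_nonneg_left key ha.le]

section LogSum

variable {ι : Type*} (s : Finset ι) {a b : ι → ℝ}

lemma sum_pos_of_forall_pos_imp_pos (hb : ∀ i ∈ s, 0 ≤ b i)
    (hab : ∀ i ∈ s, 0 < a i → 0 < b i) (ha : 0 < ∑ i ∈ s, a i) : 0 < ∑ i ∈ s, b i := by
  obtain ⟨i, hi, hai⟩ :=
    exists_lt_of_sum_lt (s := s) (f := fun _ => 0) (g := a) (by simpa using ha)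
  exact sum_pos' hb ⟨i, hi, hab i hi hai⟩

/-- The log-sum inequality. -/
lemma sum_mul_log_sum_div_sum_le (ha : ∀ i ∈ s, 0 ≤ a i) (hb : ∀ i ∈ s, 0 ≤ b i)
    (hab : ∀ i ∈ s, 0 < a i → 0 < b i) :
    (∑ i ∈ s, a i) * log ((∑ i ∈ s, a i) / ∑ i ∈ s, b i) ≤
      ∑ i ∈ s, a i * log (a i / b i) := by
  rcases (sum_nonneg ha).eq_or_lt with hA | hA
  · rw [← hA, zero_mul]
    refine sum_nonneg fun i hi => ?_
    rw [(sum_eq_zero_iff_of_nonneg ha).1 hA.symm i hi, zero_mul]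
  have hB := sum_pos_of_forall_pos_imp_pos s hb hab hA
  -- Summing the tangent-line bounds at the ratio of the totals makes the linear terms cancel.
  have hcancel : ∑ i ∈ s, (a i * log ((∑ i ∈ s, a i) / ∑ i ∈ s, b i) + a i
      - (∑ i ∈ s, a i) / (∑ i ∈ s, b i) * b i)
      = (∑ i ∈ s, a i) * log ((∑ i ∈ s, a i) / ∑ i ∈ s, b i) := by
    rw [sum_sub_distrib, sum_add_distrib, ← sum_mul, ← mul_sum, div_mul_cancel₀ _ hB.ne']
    ring
  rw [← hcancel]
  exact sum_le_sum fun i hi => mul_log_add_sub_le_mul_log_div (ha i hi) (hb i hi) (hab i hi)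
    (div_pos hA hB)

end LogSum

noncomputable def binaryKL (p q : ℝ) : ℝ := p * log (p / q) + (1 - p) * log ((1 - p) / (1 - q))

lemma mul_log_div_eq_mul_log_sub_mul_log (x : ℝ) {q : ℝ} (hq : q ≠ 0) :
    x * log (x / q) = x * log x - x * log q := by
  rcases eq_or_ne x 0 with rfl | hx
  · simp
  · rw [log_div hx hq]; ring

-- `binaryKL x q - 2 (x - q) ^ 2` for `0 < q < 1`, with the logarithms of quotients split.
noncomputable def binaryPinskerGap (q x : ℝ) : ℝ :=
  x * log x + (1 - x) * log (1 - x) - x * log q - (1 - x) * log (1 - q) - 2 * (x - q) ^ 2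

lemma hasDerivAt_binaryPinskerGap (q : ℝ) {x : ℝ} (hx : x ∈ Set.Ioo 0 1) :
    HasDerivAt (binaryPinskerGap q) (log x - log (1 - x) - log q + log (1 - q) - 4 * (x - q)) x :=
  have h1x : HasDerivAt (fun y => 1 - y) (-1) x := (hasDerivAt_id' x).const_sub 1
  ((((hasDerivAt_mul_log hx.1.ne').add ((hasDerivAt_mul_log (sub_pos.2 hx.2).ne').comp x h1x)).sub
    ((hasDerivAt_id' x).mul_const (log q))).sub (h1x.mul_const (log (1 - q)))).sub
    ((((hasDerivAt_id' x).sub_const q).pow 2).const_mul 2) |>.congr_deriv (by norm_num; ring)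

lemma convexOn_binaryPinskerGap (q : ℝ) : ConvexOn ℝ (Set.Icc 0 1) (binaryPinskerGap q) := by
  refine convexOn_of_hasDerivWithinAt2_nonneg (convex_Icc 0 1)
    (by unfold binaryPinskerGap; fun_prop)
    (f' := fun x => log x - log (1 - x) - log q + log (1 - q) - 4 * (x - q))
    (f'' := fun x => x⁻¹ + (1 - x)⁻¹ - 4) (fun x hx => ?_) (fun x hx => ?_) (fun x hx => ?_)
    <;> rw [interior_Icc] at hx <;> obtain ⟨hx0, hx1⟩ := hx
  · exact (hasDerivAt_binaryPinskerGap q ⟨hx0, hx1⟩).hasDerivWithinAt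
  · exact ((((hasDerivAt_log hx0.ne').sub
      ((hasDerivAt_log (sub_pos.2 hx1).ne').comp x ((hasDerivAt_id' x).const_sub 1))).sub_const
      (log q)).add_const (log (1 - q))).sub (((hasDerivAt_id' x).sub_const q).const_mul 4)
      |>.congr_deriv (by ring) |>.hasDerivWithinAt
  · -- `1 / x + 1 / (1 - x) ≥ 4` because `x (1 - x) ≤ 1 / 4`
    rw [inv_eq_one_div, inv_eq_one_div, div_add_div _ _ hx0.ne' (sub_pos.2 hx1).ne', sub_nonneg,
      le_div_iff₀ (by nlinarith)]
    nlinarith [sq_nonneg (2 * x - 1)]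

lemma binaryPinskerGap_nonneg {p q : ℝ} (hp : p ∈ Set.Icc 0 1) (hq : q ∈ Set.Ioo 0 1) :
    0 ≤ binaryPinskerGap q p := by
  have hmin : IsMinOn (binaryPinskerGap q) (Set.Icc 0 1) q := by
    refine (convexOn_binaryPinskerGap q).isMinOn_of_rightDeriv_eq_zero
      (by rwa [interior_Icc]) ?_
    rw [(hasDerivAt_binaryPinskerGap q hq).hasDerivWithinAt.derivWithin
      (uniqueDiffWithinAt_Ioi q)]
    ring
  have hgap_self : binaryPinskerGap q q = 0 := by unfold binaryPinskerGap; ring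
  exact hgap_self ▸ hmin hp

lemma two_mul_sq_sub_le_binaryKL_of_mem_Ioo {p q : ℝ} (hp : p ∈ Set.Icc 0 1)
    (hq : q ∈ Set.Ioo 0 1) : 2 * (p - q) ^ 2 ≤ binaryKL p q := by
  have hgap := binaryPinskerGap_nonneg hp hq
  rw [binaryPinskerGap] at hgap
  rw [binaryKL, mul_log_div_eq_mul_log_sub_mul_log _ hq.1.ne',
    mul_log_div_eq_mul_log_sub_mul_log _ (sub_pos.2 hq.2).ne']
  linarith

lemma two_mul_sq_sub_le_binaryKL {p q : ℝ} (hp : p ∈ Set.Icc 0 1) (hq : q ∈ Set.Icc 0 1)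
    (hpq : 0 < p → 0 < q) (hpq' : 0 < 1 - p → 0 < 1 - q) : 2 * (p - q) ^ 2 ≤ binaryKL p q := by
  obtain ⟨hp0, hp1⟩ := hp
  obtain ⟨hq0, hq1⟩ := hq
  rcases hq0.eq_or_lt with rfl | hq0
  · obtain rfl : p = 0 := by by_contra hp; exact (hpq (hp0.lt_of_ne' hp)).false
    simp [binaryKL]
  rcases hq1.eq_or_lt with rfl | hq1
  · obtain rfl : p = 1 := by by_contra hp; simpa using hpq' (sub_pos.2 (hp1.lt_of_ne hp))
    simp [binaryKL]
  exact two_mul_sq_sub_le_binaryKL_of_mem_Ioo ⟨hp0, hp1⟩ ⟨hq0, hq1⟩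

section Distribution

variable {ι : Type*} [Fintype ι] {P Q : ι → ℝ}

lemma sum_erase_eq_one_sub [DecidableEq ι] {R : ι → ℝ} (hR : ∑ i, R i = 1) (k : ι) :
    ∑ i ∈ univ.erase k, R i = 1 - R k := by
  rw [sum_erase_eq_sub (mem_univ k), hR]

lemma binaryKL_le_sum_mul_log_div (hP0 : ∀ i, 0 ≤ P i) (hP1 : ∑ i, P i = 1)
    (hQ0 : ∀ i, 0 ≤ Q i) (hQ1 : ∑ i, Q i = 1) (hPQ : ∀ i, 0 < P i → 0 < Q i) (k : ι) :
    binaryKL (P k) (Q k) ≤ ∑ i, P i * log (P i / Q i) := by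
  classical
  rw [← add_sum_erase _ _ (mem_univ k), binaryKL, ← sum_erase_eq_one_sub hP1,
    ← sum_erase_eq_one_sub hQ1]
  exact add_le_add_right (sum_mul_log_sum_div_sum_le _ (fun i _ => hP0 i) (fun i _ => hQ0 i)
    (fun i _ => hPQ i)) _

lemma two_mul_sq_sub_le_sum_mul_log_div (hP0 : ∀ i, 0 ≤ P i) (hP1 : ∑ i, P i = 1)
    (hQ0 : ∀ i, 0 ≤ Q i) (hQ1 : ∑ i, Q i = 1) (hPQ : ∀ i, 0 < P i → 0 < Q i) (k : ι) :
    2 * (P k - Q k) ^ 2 ≤ ∑ i, P i * log (P i / Q i) := by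
  classical
  have hle : ∀ {R : ι → ℝ}, (∀ i, 0 ≤ R i) → ∑ i, R i = 1 → R k ≤ 1 :=
    fun hR0 hR1 => hR1 ▸ single_le_sum (fun i _ => hR0 i) (mem_univ k)
  have hrest : 0 < 1 - P k → 0 < 1 - Q k := by
    rw [← sum_erase_eq_one_sub hP1, ← sum_erase_eq_one_sub hQ1]
    exact sum_pos_of_forall_pos_imp_pos _ (fun i _ => hQ0 i) (fun i _ => hPQ i)
  exact (two_mul_sq_sub_le_binaryKL ⟨hP0 k, hle hP0 hP1⟩ ⟨hQ0 k, hle hQ0 hQ1⟩ (hPQ k)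
    hrest).trans (binaryKL_le_sum_mul_log_div hP0 hP1 hQ0 hQ1 hPQ k)

end Distribution

lemma Finset.eq_of_card_eq_of_forall_lt_of_forall_le {α β : Type*} [LinearOrder β] {f : α → β}
    {S T : Finset α} (hS : ∀ i ∈ S, ∀ j ∉ S, f j < f i) (hT : ∀ i ∈ T, ∀ j ∉ T, f j ≤ f i)
    (hcard : T.card = S.card) : T = S := by
  by_contra hne
  obtain ⟨a, haT, haS⟩ := not_subset.1 fun h => hne (eq_of_subset_of_card_le h hcard.ge)
  obtain ⟨b, hbS, hbT⟩ := not_subset.1 fun h => hne (eq_of_subset_of_card_le h hcard.le).symm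
  exact (hS b hbS a haS).not_ge (hT a haT b hbT)

theorem supnorm_pinsker_topK_stability_general {N K : ℕ}
    (P Q : Fin N → ℝ)
    (hP0 : ∀ k, 0 ≤ P k) (hP1 : ∑ k, P k = 1)
    (hQ0 : ∀ k, 0 ≤ Q k) (hQ1 : ∑ k, Q k = 1)
    (hsupp : ∀ k, 0 < P k → 0 < Q k)
    (S : Finset (Fin N)) (hScard : S.card = K)
    (γ : ℝ) (hγ : 0 < γ)
    (hmargin : ∀ i ∈ S, ∀ j ∉ S, Q i - Q j ≥ γ) :
    (∀ k, |P k - Q k| ≤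
        Real.sqrt (2 * ∑ i, P i * Real.log (P i / Q i))) ∧
      ((∑ i, P i * Real.log (P i / Q i)) < γ ^ 2 / 8 →
        (∀ k, |P k - Q k| < γ / 2) ∧
          (∀ i ∈ S, ∀ j ∉ S, P j < P i) ∧
          (∀ S' : Finset (Fin N), S'.card = K →
            (∀ i ∈ S', ∀ j ∉ S', P j ≤ P i) → S' = S)) := by
  have hpinsker : ∀ k, 2 * (P k - Q k) ^ 2 ≤ ∑ i, P i * log (P i / Q i) :=
    two_mul_sq_sub_le_sum_mul_log_div hP0 hP1 hQ0 hQ1 hsupp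
  have hsup : ∀ k, |P k - Q k| ≤ √(2 * ∑ i, P i * log (P i / Q i)) := fun k =>
    abs_le_sqrt (by nlinarith [hpinsker k, sq_nonneg (P k - Q k)])
  refine ⟨hsup, fun hsmall => ?_⟩
  have hclose : ∀ k, |P k - Q k| < γ / 2 := fun k =>
    (hsup k).trans_lt (by rw [sqrt_lt' (by positivity)]; linarith)
  have hsep : ∀ i ∈ S, ∀ j ∉ S, P j < P i := fun i hi j hj => by
    linarith [abs_lt.1 (hclose i), abs_lt.1 (hclose j), hmargin i hi j hj]
  exact ⟨hclose, hsep, fun S' hS' hP' =>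
    eq_of_card_eq_of_forall_lt_of_forall_le hsep hP' (hS'.trans hScard.symm)⟩

/-- Sup-norm Pinsker bound and Top-K stability: `‖P - Q‖_∞ ≤ √(2 D_KL(P‖Q))`;
moreover, if `D_KL(P‖Q) < γ²/8` where `γ > 0` is the K-boundary margin of `Q`
(witnessed by the Top-K set `S`), then `‖P - Q‖_∞ < γ/2` and the Top-K set of
`P` equals that of `Q`. -/
theorem supnorm_pinsker_topK_stability {N K : ℕ} (hK : 1 ≤ K) (hKN : K < N)
    (P Q : Fin N → ℝ)
    (hP0 : ∀ k, 0 ≤ P k) (hP1 : ∑ k, P k = 1)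
    (hQ0 : ∀ k, 0 ≤ Q k) (hQ1 : ∑ k, Q k = 1)
    (hsupp : ∀ k, 0 < P k → 0 < Q k)
    (S : Finset (Fin N)) (hScard : S.card = K)
    (γ : ℝ) (hγ : 0 < γ)
    (hmargin : ∀ i ∈ S, ∀ j ∉ S, Q i - Q j ≥ γ) :
    (∀ k, |P k - Q k| ≤
        Real.sqrt (2 * ∑ i, P i * Real.log (P i / Q i))) ∧
      ((∑ i, P i * Real.log (P i / Q i)) < γ ^ 2 / 8 →
        (∀ k, |P k - Q k| < γ / 2) ∧
          (∀ i ∈ S, ∀ j ∉ S, P j < P i) ∧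
          (∀ S' : Finset (Fin N), S'.card = K →
            (∀ i ∈ S', ∀ j ∉ S', P j ≤ P i) → S' = S)) :=
  supnorm_pinsker_topK_stability_general P Q hP0 hP1 hQ0 hQ1 hsupp S hScard γ hγ hmargin
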